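/- Let E = (H, B, {b_θ}_{θ∈Θ}) be a generalized experiment (Θ finite), λ a probability distribution on Θ, and (D, w) a classical decision problem with payoff w : Θ × D → [0,1]. Then the maximal average payoff over all B-POVMs {M_d}_{d∈D} equals inf_{b ∈ B} sup_{d ∈ D} 2^{D_max(Σ_θ λ_θ w(θ,d) b_θ ‖ b)}. -/

import Mathlib

open Matrix ComplexOrder

variable {n : ℕ}

def Sb (b : Matrix (Fin n) (Fin n) ℂ) : Set (Matrix (Fin n) (Fin n) ℂ) :=
  {a | a.PosSemidef ∧ (a * b).trace = 1}

def IsSection (B : Set (Matrix (Fin n) (Fin n) ℂ)) : Prop :=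
  ∃ (L : Submodule ℝ (Matrix (Fin n) (Fin n) ℂ)) (b : Matrix (Fin n) (Fin n) ℂ),
    b.PosDef ∧ B = (L : Set (Matrix (Fin n) (Fin n) ℂ)) ∩ Sb b

def IsFaithfulSection (B : Set (Matrix (Fin n) (Fin n) ℂ)) : Prop :=
  IsSection B ∧ ∃ b ∈ B, b.PosDef

def dualSection (B : Set (Matrix (Fin n) (Fin n) ℂ)) : Set (Matrix (Fin n) (Fin n) ℂ) :=
  {c | c.PosSemidef ∧ ∀ b ∈ B, (b * c).trace = 1}

/-- `2^{D_max(a‖b)} = inf{μ > 0 : a ≤ μ b}`. -/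
noncomputable def expDmax (a b : Matrix (Fin n) (Fin n) ℂ) : ENNReal :=
  ⨅ (r : ℝ) (_ : 0 < r) (_ : (r • b - a).PosSemidef), ENNReal.ofReal r

/-!
Weak duality: if `a_d ≤ r_d • b` for every `d` and `Tr (b * ∑ d, M d) = 1`, then
`∑ d, Tr (a_d * M_d) ≤ ∑ d, r_d Tr (b * M_d) ≤ max_d r_d`.

Strong duality: suppose every `B`-POVM has payoff `< t`. Pick a finite `F ⊆ B` spanning `span B`
and containing a positive definite `b₀ ∈ B`, and let `Φ X = (Tr (b * X))_{b ∈ F}`. Then the convex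
cone of pairs `(Φ (∑ d, M d), r)` with `M_d ≥ 0` and `r ≤ payoff M` does not contain
`(Φ X₀, t)` for `X₀` in the dual section, and it is closed because `Tr (b₀ * ·)` is coercive on
the positive cone. A separating functional yields `K ∈ span B` with `a_d ≤ K` for all `d` and
`Tr (K * X₀) < t`; with `X₀` the matrix defining the section,
`b = t⁻¹ • (K + (t - Tr (K * X₀)) • b₀)` lies in `B` and satisfies `a_d ≤ t • b` for all `d`.
-/

theorem IsClosed.image_of_norm_le {E F : Type*} [SeminormedAddCommGroup E] [ProperSpace E]
    [TopologicalSpace F] [T2Space F] {C : Set E} (hC : IsClosed C) {f : E → F} (hf : Continuous f)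
    {g : F → ℝ} (hg : Continuous g) (hfg : ∀ x ∈ C, ‖x‖ ≤ g (f x)) : IsClosed (f '' C) := by
  refine isClosed_of_closure_subset fun y hy => ?_
  have hU : IsOpen {z | g z < g y + 1} := isOpen_lt hg continuous_const
  have hcpt : IsCompact (f '' (C ∩ Metric.closedBall 0 (g y + 1))) :=
    ((isCompact_closedBall 0 _).inter_left hC).image hf
  have hsub : {z | g z < g y + 1} ∩ f '' C ⊆ f '' (C ∩ Metric.closedBall 0 (g y + 1)) := by
    rintro _ ⟨hz, x, hx, rfl⟩
    exact ⟨x, ⟨hx, by simpa using (hfg x hx).trans hz.le⟩, rfl⟩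
  have hy' : y ∈ closure ({z | g z < g y + 1} ∩ f '' C) := hU.inter_closure ⟨by simp, hy⟩
  exact Set.image_mono Set.inter_subset_left (hcpt.isClosed.closure_subset_iff.mpr hsub hy')

lemma LinearMap.nonpos_of_lt_of_smul_mem {E : Type*} [AddCommGroup E] [Module ℝ E] {K : Set E}
    (hK : ∀ x ∈ K, ∀ s : ℝ, 0 ≤ s → s • x ∈ K) (f : E →ₗ[ℝ] ℝ) {u : ℝ}
    (hf : ∀ x ∈ K, f x < u) {x : E} (hx : x ∈ K) : f x ≤ 0 := by
  by_contra! h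
  have := hf _ (hK x hx (|u| / f x + 1) (by positivity))
  rw [map_smul, smul_eq_mul, add_mul, div_mul_cancel₀ _ h.ne', one_mul] at this
  linarith [le_abs_self u]

lemma LinearMap.apply_prod_eq_sum {ι : Type*} [Fintype ι] [DecidableEq ι]
    (f : (ι → ℝ) × ℝ →ₗ[ℝ] ℝ) (y : ι → ℝ) (r : ℝ) :
    f (y, r) = ∑ i, y i * f (Pi.single i 1, 0) + r * f (0, 1) := by
  have hy : (y, r) = (y, 0) + r • ((0 : ι → ℝ), (1 : ℝ)) := by simp
  rw [hy, map_add, map_smul, smul_eq_mul, mul_comm r]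
  congr 1
  have := (f ∘ₗ LinearMap.inl ℝ (ι → ℝ) ℝ).pi_apply_eq_sum_univ y
  simp only [LinearMap.comp_apply, LinearMap.inl_apply, smul_eq_mul] at this
  rw [this]
  congr! 4 with i
  ext j
  simp [Pi.single_apply, eq_comm]

lemma exists_finset_subset_span_of_mem {R V : Type*} [Semiring R] [AddCommMonoid V] [Module R V]
    [IsNoetherian R V] {B : Set V} {b₀ : V} (hb₀ : b₀ ∈ B) :
    ∃ F : Finset V, ↑F ⊆ B ∧ b₀ ∈ F ∧ B ⊆ Submodule.span R (F : Set V) := by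
  classical
  obtain ⟨F, hFB, hspan⟩ :=
    (Submodule.fg_span_iff_fg_span_finset_subset (R := R) B).mp (IsNoetherian.noetherian _)
  refine ⟨insert b₀ F, by simp [Set.insert_subset_iff, hb₀, hFB], Finset.mem_insert_self _ _,
    fun b hb => Submodule.span_mono (by simp) (hspan ▸ Submodule.subset_span hb)⟩

section

open scoped MatrixOrder Matrix.Norms.L2Operator

namespace Matrix

variable {m : Type*}

lemma isHermitian_of_mem_span {B : Set (Matrix m m ℂ)} (hB : ∀ b ∈ B, b.IsHermitian)
    {A : Matrix m m ℂ} (hA : A ∈ Submodule.span ℝ B) : A.IsHermitian :=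
  (Submodule.span_le (p := selfAdjoint.submodule ℝ (Matrix m m ℂ)) |>.mpr hB) hA

lemma PosSemidef.pi_single {D : Type*} [DecidableEq D] {X : Matrix m m ℂ} (hX : X.PosSemidef)
    (d d' : D) : (Pi.single (M := fun _ : D => Matrix m m ℂ) d X d').PosSemidef := by
  rcases eq_or_ne d' d with rfl | h
  · simpa using hX
  · simpa [Pi.single_eq_of_ne h] using PosSemidef.zero

variable [Fintype m]

lemma IsHermitian.ofReal_re_trace_mul {A B : Matrix m m ℂ} (hA : A.IsHermitian)
    (hB : B.IsHermitian) : ((A * B).trace.re : ℂ) = (A * B).trace := by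
  rw [← Complex.conj_eq_iff_re, ← Complex.star_def, ← trace_conjTranspose, conjTranspose_mul,
    hA.eq, hB.eq, trace_mul_comm]

lemma posSemidef_of_re_trace_mul_nonneg {Y : Matrix m m ℂ} (hY : Y.IsHermitian)
    (h : ∀ X : Matrix m m ℂ, X.PosSemidef → 0 ≤ (Y * X).trace.re) : Y.PosSemidef := by
  refine PosSemidef.of_dotProduct_mulVec_nonneg hY fun v => Complex.nonneg_iff.mpr ⟨?_, ?_⟩
  · have := h _ (posSemidef_vecMulVec_self_star v)
    rwa [trace_mul_comm, vecMulVec_mul, trace_vecMulVec, dotProduct_comm,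
      ← dotProduct_mulVec] at this
  · exact (hY.im_star_dotProduct_mulVec_self v).symm

variable [DecidableEq m]

lemma IsHermitian.re_trace_eq_sum_eigenvalues {A : Matrix m m ℂ} (hA : A.IsHermitian) :
    A.trace.re = ∑ i, hA.eigenvalues i := by
  conv_lhs => rw [hA.spectral_theorem, Unitary.conjStarAlgAut_apply, trace_mul_cycle,
    Unitary.coe_star_mul_self, one_mul, trace_diagonal]
  simp [Complex.re_sum]

lemma isClosed_setOf_posSemidef : IsClosed {X : Matrix m m ℂ | X.PosSemidef} := by
  simpa only [nonneg_iff_posSemidef] using CStarAlgebra.isClosed_nonneg (A := Matrix m m ℂ)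

lemma PosSemidef.re_trace_mul_nonneg {A B : Matrix m m ℂ} (hA : A.PosSemidef)
    (hB : B.PosSemidef) : 0 ≤ (A * B).trace.re := by
  obtain ⟨C, rfl⟩ := CStarAlgebra.nonneg_iff_eq_star_mul_self.mp hB.nonneg
  rw [← mul_assoc, trace_mul_cycle]
  exact (Complex.nonneg_iff.mp (hA.mul_mul_conjTranspose_same C).trace_nonneg).1

lemma PosSemidef.re_trace_mul_le {M A b : Matrix m m ℂ} (hM : M.PosSemidef) {r : ℝ}
    (h : (r • b - A).PosSemidef) : (A * M).trace.re ≤ r * (b * M).trace.re := by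
  have := h.re_trace_mul_nonneg hM
  rw [sub_mul, trace_sub, smul_mul_assoc, trace_smul, Complex.sub_re, Complex.smul_re] at this
  simpa [smul_eq_mul, sub_nonneg] using this

lemma PosSemidef.norm_le_re_trace {X : Matrix m m ℂ} (hX : X.PosSemidef) : ‖X‖ ≤ X.trace.re := by
  rcases isEmpty_or_nonempty m with hm | hm
  · simp [Subsingleton.elim X 0]
  obtain ⟨i, hi⟩ : ‖X‖ ∈ Set.range hX.1.eigenvalues := by
    rw [← hX.1.spectrum_real_eq_range_eigenvalues]
    exact CStarAlgebra.norm_mem_spectrum_of_nonneg hX.nonneg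
  rw [hX.1.re_trace_eq_sum_eigenvalues, ← hi]
  exact Finset.single_le_sum (fun j _ => hX.eigenvalues_nonneg j) (Finset.mem_univ i)

lemma PosDef.exists_pos_smul_one_le {b : Matrix m m ℂ} (hb : b.PosDef) :
    ∃ ε : ℝ, 0 < ε ∧ (b - ε • 1).PosSemidef := by
  rcases isEmpty_or_nonempty m with hm | hm
  · refine ⟨1, one_pos, ?_⟩
    rw [Subsingleton.elim (b - (1 : ℝ) • (1 : Matrix m m ℂ)) 0]
    exact PosSemidef.zero
  obtain ⟨ε, hε, hle⟩ := (CFC.exists_pos_algebraMap_le_iff hb.isStrictlyPositive.isSelfAdjoint).2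
    fun x hx => hb.isStrictlyPositive.spectrum_pos hx
  exact ⟨ε, hε, by rwa [Algebra.algebraMap_eq_smul_one] at hle⟩

lemma PosDef.exists_pos_smul_sub_posSemidef {b A : Matrix m m ℂ} (hb : b.PosDef)
    (hA : A.IsHermitian) : ∃ r : ℝ, 0 < r ∧ (r • b - A).PosSemidef := by
  obtain ⟨ε, hε, hεb⟩ := hb.exists_pos_smul_one_le
  have hA' : (‖A‖ • (1 : Matrix m m ℂ) - A).PosSemidef := by
    have := hA.isSelfAdjoint.le_algebraMap_norm_self
    rwa [Algebra.algebraMap_eq_smul_one] at this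
  refine ⟨(‖A‖ + 1) / ε, by positivity, ?_⟩
  have hsplit : ((‖A‖ + 1) / ε) • b - A
      = ((‖A‖ + 1) / ε) • (b - ε • 1) + (1 : ℝ) • (1 : Matrix m m ℂ) + (‖A‖ • 1 - A) := by
    rw [smul_sub, smul_smul, div_mul_cancel₀ _ hε.ne']
    module
  rw [hsplit]
  exact ((hεb.smul (by positivity)).add (PosSemidef.one.smul zero_le_one)).add hA'

lemma PosDef.exists_norm_le_re_trace_mul {b : Matrix m m ℂ} (hb : b.PosDef) :
    ∃ κ : ℝ, ∀ X : Matrix m m ℂ, X.PosSemidef → ‖X‖ ≤ κ * (b * X).trace.re := by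
  obtain ⟨ε, hε, hεb⟩ := hb.exists_pos_smul_one_le
  refine ⟨ε⁻¹, fun X hX => hX.norm_le_re_trace.trans ?_⟩
  have := hX.re_trace_mul_le (r := 1) (A := ε • 1) (b := b) (by rwa [one_smul])
  rw [smul_mul_assoc, one_mul, trace_smul, Complex.smul_re, smul_eq_mul, one_mul] at this
  rwa [le_inv_mul_iff₀ hε]

end Matrix

variable {m D ι : Type*} [Fintype m] [Fintype D]

noncomputable def reTraceMul (A : Matrix m m ℂ) : Matrix m m ℂ →ₗ[ℝ] ℝ where
  toFun X := (A * X).trace.re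
  map_add' X Y := by simp [mul_add]
  map_smul' r X := by simp [trace_smul]

@[simp] lemma reTraceMul_apply (A X : Matrix m m ℂ) : reTraceMul A X = (A * X).trace.re := rfl

noncomputable def payoff (a : D → Matrix m m ℂ) : (D → Matrix m m ℂ) →ₗ[ℝ] ℝ :=
  ∑ d, reTraceMul (a d) ∘ₗ LinearMap.proj d

lemma payoff_apply (a M : D → Matrix m m ℂ) : payoff a M = ∑ d, (a d * M d).trace.re := by
  simp [payoff]

lemma payoff_pi_single [DecidableEq D] (a : D → Matrix m m ℂ) (d : D) (X : Matrix m m ℂ) :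
    payoff a (Pi.single d X) = (a d * X).trace.re := by
  rw [payoff_apply, Finset.sum_eq_single d (fun d' _ h => by simp [Pi.single_eq_of_ne h])
    (by simp)]
  simp

lemma payoff_sum_smul {Θ : Type*} [Fintype Θ] (c : Θ → D → ℝ) (b : Θ → Matrix m m ℂ)
    (M : D → Matrix m m ℂ) :
    payoff (fun d => ∑ θ, c θ d • b θ) M = ∑ θ, ∑ d, c θ d * (M d * b θ).trace.re := by
  rw [payoff_apply, Finset.sum_comm]
  refine Finset.sum_congr rfl fun d _ => ?_
  simp [Finset.sum_mul, trace_sum, Complex.re_sum, trace_mul_comm (b _)]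

lemma payoff_le_of_posSemidef_smul_sub [DecidableEq m] {a M : D → Matrix m m ℂ} {b : Matrix m m ℂ} {r : D → ℝ}
    {μ : ℝ} (hM : ∀ d, (M d).PosSemidef) (hb : b.PosSemidef) (hMb : (b * ∑ d, M d).trace = 1)
    (hr : ∀ d, (r d • b - a d).PosSemidef) (hrμ : ∀ d, r d ≤ μ) : payoff a M ≤ μ :=
  calc payoff a M = ∑ d, (a d * M d).trace.re := payoff_apply a M
    _ ≤ ∑ d, r d * (b * M d).trace.re :=
        Finset.sum_le_sum fun d _ => (hM d).re_trace_mul_le (hr d)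
    _ ≤ ∑ d, μ * (b * M d).trace.re := Finset.sum_le_sum fun d _ =>
        mul_le_mul_of_nonneg_right (hrμ d) (hb.re_trace_mul_nonneg (hM d))
    _ = μ := by
        rw [← Finset.mul_sum, ← Complex.re_sum, ← trace_sum, ← Finset.mul_sum, hMb,
          Complex.one_re, mul_one]

def payoffCone (Φ : Matrix m m ℂ →ₗ[ℝ] ι → ℝ) (a : D → Matrix m m ℂ) : Set ((ι → ℝ) × ℝ) :=
  ((Φ ∘ₗ ∑ d, LinearMap.proj d).prodMap LinearMap.id) ''
    {x | (∀ d, (x.1 d).PosSemidef) ∧ x.2 ≤ payoff a x.1}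

lemma mem_payoffCone {Φ : Matrix m m ℂ →ₗ[ℝ] ι → ℝ} {a : D → Matrix m m ℂ} {q : (ι → ℝ) × ℝ} :
    q ∈ payoffCone Φ a ↔
      ∃ M : D → Matrix m m ℂ, (∀ d, (M d).PosSemidef) ∧ Φ (∑ d, M d) = q.1 ∧ q.2 ≤ payoff a M := by
  constructor
  · rintro ⟨⟨M, r⟩, ⟨hM, hr⟩, rfl⟩
    exact ⟨M, hM, by simp, hr⟩
  · rintro ⟨M, hM, hΦ, hr⟩
    exact ⟨(M, q.2), ⟨hM, hr⟩, by simp [hΦ]⟩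

lemma convex_payoffCone (Φ : Matrix m m ℂ →ₗ[ℝ] ι → ℝ) (a : D → Matrix m m ℂ) :
    Convex ℝ (payoffCone Φ a) := by
  refine Convex.linear_image ?_ _
  rintro ⟨M, r⟩ ⟨hM, hr⟩ ⟨M', r'⟩ ⟨hM', hr'⟩ α β hα hβ -
  refine ⟨fun d => ((hM d).smul hα).add ((hM' d).smul hβ), ?_⟩
  simp only [Prod.fst_add, Prod.snd_add, Prod.smul_fst, Prod.smul_snd, map_add, map_smul,
    smul_eq_mul]
  exact add_le_add (mul_le_mul_of_nonneg_left hr hα) (mul_le_mul_of_nonneg_left hr' hβ)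

lemma smul_mem_payoffCone {Φ : Matrix m m ℂ →ₗ[ℝ] ι → ℝ} {a : D → Matrix m m ℂ}
    {q : (ι → ℝ) × ℝ} (hq : q ∈ payoffCone Φ a) {s : ℝ} (hs : 0 ≤ s) : s • q ∈ payoffCone Φ a := by
  obtain ⟨⟨M, r⟩, ⟨hM, hr⟩, rfl⟩ := hq
  refine ⟨s • (M, r), ⟨fun d => (hM d).smul hs, ?_⟩, map_smul _ _ _⟩
  simpa [map_smul] using mul_le_mul_of_nonneg_left hr hs

lemma isClosed_payoffCone [DecidableEq m] [Fintype ι] {Φ : Matrix m m ℂ →ₗ[ℝ] ι → ℝ} (a : D → Matrix m m ℂ)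
    (hΦ : ∃ g : (ι → ℝ) →ₗ[ℝ] ℝ, ∀ X : Matrix m m ℂ, X.PosSemidef → ‖X‖ ≤ g (Φ X)) :
    IsClosed (payoffCone Φ a) := by
  obtain ⟨g, hg⟩ := hΦ
  refine IsClosed.image_of_norm_le ?_ (LinearMap.continuous_of_finiteDimensional _)
    (g := fun q => g q.1 + |q.2|) (by fun_prop) ?_
  · refine IsClosed.inter (s₁ := {x : (D → Matrix m m ℂ) × ℝ | ∀ d, (x.1 d).PosSemidef}) ?_ ?_
    · rw [Set.ofPred_forall]
      exact isClosed_iInter fun d => isClosed_setOf_posSemidef.preimage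
        (f := fun x : (D → Matrix m m ℂ) × ℝ => x.1 d) (by fun_prop)
    · exact isClosed_le continuous_snd
        ((payoff a).continuous_of_finiteDimensional.comp continuous_fst)
  · rintro ⟨M, r⟩ ⟨hM, -⟩
    have hM' : ‖M‖ ≤ g (Φ (∑ d, M d)) :=
      calc ‖M‖ ≤ ∑ d, ‖M d‖ := (pi_norm_le_iff_of_nonneg (by positivity)).mpr
            fun d => Finset.single_le_sum (fun d _ => norm_nonneg (M d)) (Finset.mem_univ d)
        _ ≤ ∑ d, g (Φ (M d)) := Finset.sum_le_sum fun d _ => hg (M d) (hM d)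
        _ = g (Φ (∑ d, M d)) := by simp only [map_sum]
    simp only [LinearMap.prodMap_apply, LinearMap.id_apply, LinearMap.coe_comp,
      Function.comp_apply, LinearMap.coe_sum, LinearMap.coe_proj, Finset.sum_apply,
      Function.eval]
    refine norm_prod_le_iff.mpr ⟨?_, ?_⟩ <;> simp only [Real.norm_eq_abs] <;>
      linarith [abs_nonneg r, norm_nonneg M]

def IsPOVM (B : Set (Matrix (Fin n) (Fin n) ℂ)) (M : D → Matrix (Fin n) (Fin n) ℂ) : Prop :=
  (∀ d, (M d).PosSemidef) ∧ ∑ d, M d ∈ dualSection B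

lemma IsSection.posSemidef {B : Set (Matrix (Fin n) (Fin n) ℂ)} (hB : IsSection B)
    {b : Matrix (Fin n) (Fin n) ℂ} (hb : b ∈ B) : b.PosSemidef := by
  obtain ⟨L, bs, -, rfl⟩ := hB
  exact hb.2.1

lemma expDmax_le_ofReal {a b : Matrix (Fin n) (Fin n) ℂ} {r : ℝ} (hr : 0 < r)
    (h : (r • b - a).PosSemidef) : expDmax a b ≤ ENNReal.ofReal r :=
  iInf₂_le_of_le r hr (iInf_le _ h)

lemma exists_of_expDmax_lt {a b : Matrix (Fin n) (Fin n) ℂ} {x : ENNReal} (h : expDmax a b < x) :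
    ∃ r : ℝ, 0 < r ∧ (r • b - a).PosSemidef ∧ ENNReal.ofReal r < x := by
  simp only [expDmax, iInf_lt_iff] at h
  obtain ⟨r, hr, hrb, hrx⟩ := h
  exact ⟨r, hr, hrb, hrx⟩

lemma ofReal_payoff_le_iSup_expDmax {a M : D → Matrix (Fin n) (Fin n) ℂ}
    {b : Matrix (Fin n) (Fin n) ℂ} (hM : ∀ d, (M d).PosSemidef) (hb : b.PosSemidef)
    (hMb : (b * ∑ d, M d).trace = 1) :
    ENNReal.ofReal (payoff a M) ≤ ⨆ d, expDmax (a d) b := by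
  refine le_of_forall_gt_imp_ge_of_dense fun x hx => ?_
  rcases eq_or_ne x ⊤ with rfl | hx_top
  · exact le_top
  choose r hr hrb hrx using fun d =>
    exists_of_expDmax_lt ((le_iSup (fun d => expDmax (a d) b) d).trans_lt hx)
  rw [ENNReal.ofReal_le_iff_le_toReal hx_top]
  exact payoff_le_of_posSemidef_smul_sub hM hb hMb hrb fun d =>
    ((ENNReal.ofReal_lt_iff_lt_toReal (hr d).le hx_top).mp (hrx d)).le

lemma bddAbove_payoff_image {B : Set (Matrix (Fin n) (Fin n) ℂ)} {b₀ : Matrix (Fin n) (Fin n) ℂ}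
    (hb₀B : b₀ ∈ B) (hb₀ : b₀.PosDef) {a : D → Matrix (Fin n) (Fin n) ℂ}
    (ha : ∀ d, (a d).IsHermitian) : BddAbove (payoff a '' {M | IsPOVM B M}) := by
  choose r hr hrb using fun d => hb₀.exists_pos_smul_sub_posSemidef (ha d)
  refine ⟨∑ d, r d, ?_⟩
  rintro _ ⟨M, ⟨hM, hMB⟩, rfl⟩
  exact payoff_le_of_posSemidef_smul_sub hM hb₀.posSemidef (hMB.2 b₀ hb₀B) hrb
    fun d => Finset.single_le_sum (fun d _ => (hr d).le) (Finset.mem_univ d)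

lemma mem_dualSection_of_re_trace_mul_eq {B F : Set (Matrix (Fin n) (Fin n) ℂ)}
    (hB : ∀ b ∈ B, b.IsHermitian) (hBF : B ⊆ Submodule.span ℝ F) {X X₀ : Matrix (Fin n) (Fin n) ℂ}
    (hX : X.PosSemidef) (hX₀ : X₀ ∈ dualSection B)
    (h : ∀ b ∈ F, (b * X).trace.re = (b * X₀).trace.re) : X ∈ dualSection B := by
  refine ⟨hX, fun b hb => ?_⟩
  have hker : Submodule.span ℝ F ≤ LinearMap.ker (reTraceMul X - reTraceMul X₀) :=
    Submodule.span_le.mpr fun b hb => by simp [trace_mul_comm X, trace_mul_comm X₀, h b hb]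
  have hre : (b * X).trace.re = (b * X₀).trace.re := by
    simpa [trace_mul_comm X, trace_mul_comm X₀, sub_eq_zero] using hker (hBF hb)
  rw [← (hB b hb).ofReal_re_trace_mul hX.1, hre, (hB b hb).ofReal_re_trace_mul hX₀.1.1,
    hX₀.2 b hb]

theorem exists_separating_of_payoff_lt {B : Set (Matrix (Fin n) (Fin n) ℂ)}
    (hB : ∀ b ∈ B, b.IsHermitian) {b₀ : Matrix (Fin n) (Fin n) ℂ} (hb₀B : b₀ ∈ B) (hb₀ : b₀.PosDef)
    {X₀ : Matrix (Fin n) (Fin n) ℂ} (hX₀ : X₀ ∈ dualSection B) {a : D → Matrix (Fin n) (Fin n) ℂ}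
    {t : ℝ} (ht : ∀ M, IsPOVM B M → payoff a M < t) :
    ∃ H ∈ Submodule.span ℝ B, ∃ c : ℝ, 0 ≤ c ∧ 0 < (H * X₀).trace.re + t * c ∧
      ∀ M : D → Matrix (Fin n) (Fin n) ℂ, (∀ d, (M d).PosSemidef) →
        (H * ∑ d, M d).trace.re + payoff a M * c ≤ 0 := by
  classical
  obtain ⟨F, hFB, hb₀F, hBF⟩ := exists_finset_subset_span_of_mem (R := ℝ) hb₀B
  let Φ : Matrix (Fin n) (Fin n) ℂ →ₗ[ℝ] F → ℝ := LinearMap.pi fun b => reTraceMul b.1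
  have hclosed : IsClosed (payoffCone Φ a) := by
    obtain ⟨κ, hκ⟩ := hb₀.exists_norm_le_re_trace_mul
    exact isClosed_payoffCone a ⟨κ • LinearMap.proj ⟨b₀, hb₀F⟩, hκ⟩
  have hp : (Φ X₀, t) ∉ payoffCone Φ a := by
    intro h
    obtain ⟨M, hM, hΦ, hr⟩ := mem_payoffCone.mp h
    have hdual : ∑ d, M d ∈ dualSection B :=
      mem_dualSection_of_re_trace_mul_eq hB hBF (posSemidef_sum _ fun d _ => hM d) hX₀
        fun b hb => congr_fun hΦ ⟨b, hb⟩
    exact (ht M ⟨hM, hdual⟩).not_ge hr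
  obtain ⟨f, u, hfK, hfp⟩ :=
    geometric_hahn_banach_closed_point (convex_payoffCone Φ a) hclosed hp
  have hf0 : ∀ q ∈ payoffCone Φ a, f q ≤ 0 := fun q hq =>
    LinearMap.nonpos_of_lt_of_smul_mem (fun q hq s hs => smul_mem_payoffCone hq hs) f hfK hq
  have hmem : ∀ M : D → Matrix (Fin n) (Fin n) ℂ, (∀ d, (M d).PosSemidef) →
      ∀ r ≤ payoff a M, (Φ (∑ d, M d), r) ∈ payoffCone Φ a := fun M hM r hr =>
    mem_payoffCone.mpr ⟨M, hM, rfl, hr⟩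
  set H : Matrix (Fin n) (Fin n) ℂ := ∑ b : F, f (Pi.single b 1, 0) • b.1
  have hf : ∀ X r, f (Φ X, r) = (H * X).trace.re + r * f (0, 1) := by
    intro X r
    rw [← ContinuousLinearMap.coe_coe, LinearMap.apply_prod_eq_sum]
    simp [H, Φ, Finset.sum_mul, trace_sum, Complex.re_sum, mul_comm]
  refine ⟨H, Submodule.sum_mem _ fun b _ => Submodule.smul_mem _ _
    (Submodule.subset_span (hFB b.2)), f (0, 1), ?_, ?_, fun M hM => ?_⟩
  · have := hf0 _ (hmem 0 (fun _ => PosSemidef.zero) (-1) (by simp))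
    rw [hf] at this
    simpa using this
  · have hu := hfK _ (hmem 0 (fun _ => PosSemidef.zero) 0 (by simp))
    rw [hf] at hu
    rw [← hf]
    simpa using hu.trans hfp
  · rw [← hf]
    exact hf0 _ (hmem M hM _ le_rfl)

theorem exists_dual_certificate [Nonempty D] {B : Set (Matrix (Fin n) (Fin n) ℂ)}
    (hB : ∀ b ∈ B, b.IsHermitian) {b₀ : Matrix (Fin n) (Fin n) ℂ} (hb₀B : b₀ ∈ B) (hb₀ : b₀.PosDef)
    {X₀ : Matrix (Fin n) (Fin n) ℂ} (hX₀ : X₀ ∈ dualSection B) {a : D → Matrix (Fin n) (Fin n) ℂ}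
    {t : ℝ} (ht : ∀ M, IsPOVM B M → payoff a M < t) :
    ∃ K ∈ Submodule.span ℝ B, (K * X₀).trace.re < t ∧
      ∀ M : D → Matrix (Fin n) (Fin n) ℂ, (∀ d, (M d).PosSemidef) →
        payoff a M ≤ (K * ∑ d, M d).trace.re := by
  classical
  obtain ⟨H, hH, c, hc0, hHt, hHM⟩ := exists_separating_of_payoff_lt hB hb₀B hb₀ hX₀ ht
  have hc : 0 < c := by
    refine hc0.lt_of_ne' fun hc => ?_
    have hneg : (-H).PosSemidef :=
      posSemidef_of_re_trace_mul_nonneg (isHermitian_of_mem_span hB hH).neg fun X hX => by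
        simpa [hc, Finset.sum_pi_single'] using hHM _ (hX.pi_single (Classical.arbitrary D))
    have := hneg.re_trace_mul_nonneg hX₀.1
    simp only [neg_mul, trace_neg, Complex.neg_re, hc, mul_zero, add_zero] at this hHt
    linarith
  have hre : ∀ X, ((-c⁻¹ • H) * X).trace.re = -(H * X).trace.re / c := fun X => by
    rw [smul_mul_assoc, trace_smul, Complex.smul_re, smul_eq_mul]
    ring
  refine ⟨-c⁻¹ • H, Submodule.smul_mem _ _ hH, ?_, fun M hM => ?_⟩
  · rw [hre, div_lt_iff₀ hc]
    linarith
  · rw [hre, le_div_iff₀ hc]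
    linarith [hHM M hM]

lemma posSemidef_sub_of_payoff_le {a : D → Matrix (Fin n) (Fin n) ℂ}
    (ha : ∀ d, (a d).IsHermitian) {K : Matrix (Fin n) (Fin n) ℂ} (hK : K.IsHermitian)
    (h : ∀ M : D → Matrix (Fin n) (Fin n) ℂ, (∀ d, (M d).PosSemidef) →
      payoff a M ≤ (K * ∑ d, M d).trace.re) (d : D) : (K - a d).PosSemidef := by
  classical
  refine posSemidef_of_re_trace_mul_nonneg (hK.sub (ha d)) fun X hX => ?_
  have := h (Pi.single d X) (hX.pi_single d)
  rw [payoff_pi_single, Finset.sum_pi_single', if_pos (Finset.mem_univ d)] at this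
  rw [sub_mul, trace_sub, Complex.sub_re]
  linarith

theorem IsFaithfulSection.exists_mem_expDmax_le [Nonempty D] {B : Set (Matrix (Fin n) (Fin n) ℂ)}
    (hB : IsFaithfulSection B) {a : D → Matrix (Fin n) (Fin n) ℂ} (ha : ∀ d, (a d).PosSemidef)
    {t : ℝ} (ht : ∀ M, IsPOVM B M → payoff a M < t) :
    ∃ b ∈ B, ∀ d, expDmax (a d) b ≤ ENNReal.ofReal t := by
  obtain ⟨⟨L, bs, hbs, rfl⟩, b₀, hb₀B, hb₀⟩ := hB
  have hBherm : ∀ b ∈ (L : Set _) ∩ Sb bs, b.IsHermitian := fun b hb => hb.2.1.1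
  obtain ⟨K, hKspan, hKt, hKM⟩ :=
    exists_dual_certificate hBherm hb₀B hb₀ ⟨hbs.posSemidef, fun b hb => hb.2.2⟩ ht
  have hKa := posSemidef_sub_of_payoff_le (fun d => (ha d).1)
    (isHermitian_of_mem_span hBherm hKspan) hKM
  have hK : K.PosSemidef := by
    simpa using (hKa (Classical.arbitrary D)).add (ha (Classical.arbitrary D))
  set τ := (K * bs).trace.re
  have hτ : 0 ≤ τ := hK.re_trace_mul_nonneg hbs.posSemidef
  have ht0 : 0 < t := hτ.trans_lt hKt
  have hKL : K ∈ L := Submodule.span_le.mpr (fun b hb => hb.1) hKspan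
  refine ⟨t⁻¹ • (K + (t - τ) • b₀), ⟨?_, ?_, ?_⟩, fun d => expDmax_le_ofReal ht0 ?_⟩
  · exact L.smul_mem _ (L.add_mem hKL (L.smul_mem _ hb₀B.1))
  · exact (hK.add (hb₀.posSemidef.smul (by linarith))).smul (by positivity)
  · rw [smul_mul_assoc, add_mul, smul_mul_assoc, trace_smul, trace_add, trace_smul, hb₀B.2.2,
      ← hK.1.ofReal_re_trace_mul hbs.1, Complex.real_smul, Complex.real_smul]
    push_cast
    field_simp
    ring
  · rw [smul_smul, mul_inv_cancel₀ ht0.ne', one_smul,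
      show K + (t - τ) • b₀ - a d = (K - a d) + (t - τ) • b₀ by abel]
    exact (hKa d).add (hb₀.posSemidef.smul (by linarith))

theorem IsFaithfulSection.ofReal_sSup_payoff_eq {B : Set (Matrix (Fin n) (Fin n) ℂ)}
    (hB : IsFaithfulSection B) {a : D → Matrix (Fin n) (Fin n) ℂ} (ha : ∀ d, (a d).PosSemidef) :
    ENNReal.ofReal (sSup (payoff a '' {M | IsPOVM B M})) = ⨅ b ∈ B, ⨆ d, expDmax (a d) b := by
  obtain ⟨b₀, hb₀B, hb₀⟩ := hB.2
  refine le_antisymm (le_iInf₂ fun b hb => ?_) ?_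
  · rcases eq_or_ne (⨆ d, expDmax (a d) b) ⊤ with hE | hE
    · exact hE ▸ le_top
    rw [← ENNReal.ofReal_toReal hE]
    refine ENNReal.ofReal_le_ofReal (Real.sSup_le ?_ ENNReal.toReal_nonneg)
    rintro _ ⟨M, ⟨hM, hMB⟩, rfl⟩
    exact (ENNReal.ofReal_le_iff_le_toReal hE).mp
      (ofReal_payoff_le_iSup_expDmax hM (hB.1.posSemidef hb) (hMB.2 b hb))
  · rcases isEmpty_or_nonempty D with hD | hD
    · exact iInf₂_le_of_le b₀ hb₀B (by simp)
    refine ENNReal.le_of_forall_pos_le_add fun ε hε _ => ?_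
    set s := sSup (payoff a '' {M | IsPOVM B M})
    obtain ⟨b, hb, hbt⟩ := hB.exists_mem_expDmax_le ha (t := s + ε) fun M hM =>
      lt_add_of_le_of_pos (le_csSup (bddAbove_payoff_image hb₀B hb₀ fun d => (ha d).1)
        ⟨M, hM, rfl⟩) hε
    calc ⨅ b ∈ B, ⨆ d, expDmax (a d) b ≤ ⨆ d, expDmax (a d) b := iInf₂_le b hb
      _ ≤ ENNReal.ofReal (s + ε) := iSup_le hbt
      _ ≤ ENNReal.ofReal s + ε := by simpa using ENNReal.ofReal_add_le (p := s) (q := ε)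

end

theorem stmt18_general {Θ D : Type*} [Fintype Θ] [Fintype D]
    (B : Set (Matrix (Fin n) (Fin n) ℂ)) (hB : IsFaithfulSection B)
    (bfam : Θ → Matrix (Fin n) (Fin n) ℂ) (hbfam : ∀ θ, bfam θ ∈ B)
    (lam : Θ → ℝ) (hlam0 : ∀ θ, 0 ≤ lam θ)
    (w : Θ → D → ℝ) (hw0 : ∀ θ d, 0 ≤ w θ d) :
    ENNReal.ofReal
        (sSup {r | ∃ M : D → Matrix (Fin n) (Fin n) ℂ,
          (∀ d, (M d).PosSemidef) ∧ (∑ d, M d) ∈ dualSection B ∧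
          r = ∑ θ, ∑ d, lam θ * w θ d * ((M d * bfam θ).trace).re}) =
      ⨅ b ∈ B, ⨆ d : D, expDmax (∑ θ, (lam θ * w θ d) • bfam θ) b := by
  have ha : ∀ d, (∑ θ, (lam θ * w θ d) • bfam θ).PosSemidef := fun d =>
    posSemidef_sum _ fun θ _ => (hB.1.posSemidef (hbfam θ)).smul (mul_nonneg (hlam0 θ) (hw0 θ d))
  convert hB.ofReal_sSup_payoff_eq ha using 3
  ext r
  simp only [Set.mem_ofPred_eq, Set.mem_image, payoff_sum_smul, IsPOVM, eq_comm (a := r),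
    and_assoc]

/-- The maximal average payoff over all `B`-POVMs equals
`inf_{b ∈ B} sup_{d ∈ D} 2^{D_max(Σ_θ λ_θ w(θ,d) b_θ ‖ b)}`. -/
theorem stmt18 {Θ D : Type*} [Fintype Θ] [Fintype D]
    (B : Set (Matrix (Fin n) (Fin n) ℂ)) (hB : IsFaithfulSection B)
    (bfam : Θ → Matrix (Fin n) (Fin n) ℂ) (hbfam : ∀ θ, bfam θ ∈ B)
    (lam : Θ → ℝ) (hlam0 : ∀ θ, 0 ≤ lam θ) (hlam1 : ∑ θ, lam θ = 1)
    (w : Θ → D → ℝ) (hw0 : ∀ θ d, 0 ≤ w θ d) (hw1 : ∀ θ d, w θ d ≤ 1) :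
    ENNReal.ofReal
        (sSup {r | ∃ M : D → Matrix (Fin n) (Fin n) ℂ,
          (∀ d, (M d).PosSemidef) ∧ (∑ d, M d) ∈ dualSection B ∧
          r = ∑ θ, ∑ d, lam θ * w θ d * ((M d * bfam θ).trace).re}) =
      ⨅ b ∈ B, ⨆ d : D, expDmax (∑ θ, (lam θ * w θ d) • bfam θ) b :=
  stmt18_general B hB bfam hbfam lam hlam0 w hw0
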